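/- Given a convex set G ⊆ ℝᵈ with 0 ∉ G, there exists a linear extended function f : ℝᵈ → ℝ̄ with f(x) = -∞ for all x ∈ G. -/

import Mathlib

/-- A *linear extended function*: scaling and additivity whenever the sum is legal. -/
def IsLinExt {E : Type*} [AddCommGroup E] [Module ℝ E] (f : E → EReal) : Prop :=
  (∀ (α : ℝ) (x : E), f (α • x) = (α : EReal) * f x) ∧
  (∀ x x' : E, ¬ ((f x = ⊤ ∧ f x' = ⊥) ∨ (f x = ⊥ ∧ f x' = ⊤)) →
    f (x + x') = f x + f x')

/-- An *affine extended function*: a horizontally and vertically shifted linear extended fn. -/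
def IsAffExt {E : Type*} [AddCommGroup E] [Module ℝ E] (h : E → EReal) : Prop :=
  ∃ (f : E → EReal) (x₀ : E) (β : ℝ), IsLinExt f ∧ ∀ x, h x = f (x - x₀) + (β : EReal)

/-!
Induction on the dimension. A nonempty convex set `G` missing `0` lies in a half-space
`{ℓ ≥ 0}` with `ℓ ≠ 0`: if `G` has interior, take a supporting hyperplane at `0`; otherwise `G`
lies in a proper affine subspace, on which some `ℓ ≠ 0` is constant. Set `f = ⊥` on `{ℓ > 0}`,
`f = ⊤` on `{ℓ < 0}`, and on `ker ℓ` use the function obtained by induction for `G ∩ ker ℓ`.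
-/

section LinExt

variable {E F : Type*} [AddCommGroup E] [Module ℝ E] [AddCommGroup F] [Module ℝ F]

lemma isLinExt_zero : IsLinExt (fun _ : E ↦ (0 : EReal)) :=
  ⟨fun _ _ ↦ by simp, fun _ _ _ ↦ by simp⟩

lemma IsLinExt.map_zero {f : E → EReal} (hf : IsLinExt f) : f 0 = 0 := by
  simpa using hf.1 0 0

lemma IsLinExt.comp_linearMap {f : F → EReal} (hf : IsLinExt f) (A : E →ₗ[ℝ] F) :
    IsLinExt (f ∘ A) :=
  ⟨fun α x ↦ by simp [hf.1], fun x x' h ↦ by simpa using hf.2 (A x) (A x') h⟩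

lemma isLinExt_ite_sign (ℓ : E →ₗ[ℝ] ℝ) {g : E → EReal} (hg : IsLinExt g) :
    IsLinExt (fun x ↦ if 0 < ℓ x then ⊥ else if ℓ x < 0 then ⊤ else g x) := by
  refine ⟨fun α x ↦ ?_, fun x x' h ↦ ?_⟩
  · simp only [map_smul, smul_eq_mul]
    rcases lt_trichotomy α 0 with hα | rfl | hα
    · split_ifs <;> first
        | (exfalso; nlinarith)
        | simp [EReal.coe_mul_bot_of_neg hα, EReal.coe_mul_top_of_neg hα, hg.1]
    · simp [hg.map_zero]
    · split_ifs <;> first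
        | (exfalso; nlinarith)
        | simp [EReal.coe_mul_bot_of_pos hα, EReal.coe_mul_top_of_pos hα, hg.1]
  · beta_reduce at h
    simp only [map_add]
    split_ifs at h ⊢ <;> first
      | (exfalso; linarith)
      | exact hg.2 x x' h
      | simp_all

end LinExt

lemma exists_dual_ne_zero_eq_of_affineSpan_ne_top {K V : Type*} [Field K] [AddCommGroup V]
    [Module K V] {G : Set V} (hG : affineSpan K G ≠ ⊤) {x₀ : V} (hx₀ : x₀ ∈ G) :
    ∃ ℓ : Module.Dual K V, ℓ ≠ 0 ∧ ∀ x ∈ G, ℓ x = ℓ x₀ := by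
  have hlt : vectorSpan K G < ⊤ := lt_top_iff_ne_top.2 fun h ↦
    hG ((AffineSubspace.affineSpan_eq_top_iff_vectorSpan_eq_top_of_nonempty K V V ⟨x₀, hx₀⟩).2 h)
  obtain ⟨ℓ, hℓ, hspan⟩ := (vectorSpan K G).exists_le_ker_of_lt_top hlt
  refine ⟨ℓ, hℓ, fun x hx ↦ ?_⟩
  have := hspan (vsub_mem_vectorSpan K hx hx₀)
  rwa [LinearMap.mem_ker, vsub_eq_sub, map_sub, sub_eq_zero] at this

section FiniteDimensional

variable {E : Type*} [NormedAddCommGroup E] [NormedSpace ℝ E] [FiniteDimensional ℝ E]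

lemma Convex.exists_dual_ne_zero_nonneg_of_zero_notMem {G : Set E} (hG : Convex ℝ G)
    (hne : G.Nonempty) (h0 : 0 ∉ G) : ∃ ℓ : Module.Dual ℝ E, ℓ ≠ 0 ∧ ∀ x ∈ G, 0 ≤ ℓ x := by
  by_cases hint : (interior G).Nonempty
  · obtain ⟨f, hf, hfG⟩ := geometric_hahn_banach_of_nonempty_interior_point hG
      (fun h ↦ h0 (interior_subset h)) hint
    refine ⟨-f.toLinearMap, neg_ne_zero.2 (by exact_mod_cast hf), fun x hx ↦ ?_⟩
    simpa using hfG x hx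
  · obtain ⟨x₀, hx₀⟩ := hne
    obtain ⟨ℓ, hℓ, hconst⟩ := exists_dual_ne_zero_eq_of_affineSpan_ne_top
      (mt hG.interior_nonempty_iff_affineSpan_eq_top.2 hint) hx₀
    rcases le_total 0 (ℓ x₀) with h | h
    · exact ⟨ℓ, hℓ, fun x hx ↦ hconst x hx ▸ h⟩
    · exact ⟨-ℓ, neg_ne_zero.2 hℓ, fun x hx ↦ by simpa [hconst x hx] using h⟩

theorem Convex.exists_isLinExt_eq_bot_of_zero_notMem {G : Set E} (hG : Convex ℝ G)
    (h0 : (0 : E) ∉ G) : ∃ f : E → EReal, IsLinExt f ∧ ∀ x ∈ G, f x = ⊥ := by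
  induction hn : Module.finrank ℝ E using Nat.strong_induction_on generalizing E with
  | _ n ih =>
  rcases G.eq_empty_or_nonempty with rfl | hne
  · exact ⟨_, isLinExt_zero, by simp⟩
  obtain ⟨ℓ, hℓ, hℓG⟩ := hG.exists_dual_ne_zero_nonneg_of_zero_notMem hne h0
  set K := LinearMap.ker ℓ
  have hK : Module.finrank ℝ K < n :=
    hn ▸ Submodule.finrank_lt (mt LinearMap.ker_eq_top.1 hℓ)
  obtain ⟨g, hg, hgG⟩ := ih _ hK (hG.linear_preimage K.subtype) (by simpa using h0) rfl
  obtain ⟨π, hπ⟩ := K.subtype.exists_leftInverse_of_injective K.ker_subtype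
  refine ⟨_, isLinExt_ite_sign ℓ (hg.comp_linearMap π), fun x hx ↦ ?_⟩
  rcases (hℓG x hx).lt_or_eq with hpos | hzero
  · simp [hpos]
  · have hπx : π x = ⟨x, hzero.symm⟩ := LinearMap.congr_fun hπ ⟨x, hzero.symm⟩
    simpa [← hzero, hπx] using hgG ⟨x, hzero.symm⟩ hx

end FiniteDimensional

theorem stmt_10 (d : ℕ) (G : Set (Fin d → ℝ)) (hG : Convex ℝ G) (h0 : (0 : Fin d → ℝ) ∉ G) :
    ∃ f : (Fin d → ℝ) → EReal, IsLinExt f ∧ ∀ x ∈ G, f x = ⊥ :=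
  hG.exists_isLinExt_eq_bot_of_zero_notMem h0
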